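/- arXiv:2109.07704 — 3 statements merged into one kernel-verified Lean document; each statement's English description precedes it below -/
import Mathlib

section
/- Suppose for each i, the local iterate satisfies x_i^t = X_i^{t₀} − γ ∑_{τ=t₀}^{t−1} g_i^τ and the global iterate satisfies X^t = X^{t₀} − γ ∑_{τ=t₀}^{t−1} U ∑_{j=1}^N g_j^τ, where t − t₀ ≤ I − 1, each ‖g_i^τ‖² ≤ G², U = diag(1/n₁,…,1/n_M), and each g_j^τ is supported on S(j) with n_m = |{j : m ∈ S(j)}|. Then (1/N) ∑_{i=1}^N ‖x_i^t − X_i^t‖² ≤ 4γ² G² (I−1)². -/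
/-!
Both iterates start from `X^{t₀}`, so on a coordinate `m ∈ S(i)` the deviation `x_i^t - X_i^t`
is `γ` times a sum over at most `I - 1` steps of `(U ∑ⱼ gⱼ^τ)_m - g_{i,m}^τ`. Cauchy–Schwarz in
time reduces the claim to a single step, and there `(a - b)² ≤ 2a² + 2b²` splits the deviation
into the local gradients, of total squared norm at most `N G²`, and the averaged update. Each
coordinate of the averaged update is the mean of the `n_m` gradients that hold `m`, so by
Cauchy–Schwarz its square counted `n_m` times is at most their sum of squares, and the averaged
update also contributes at most `N G²`.
-/

open Finset

lemma sum_const_sq_mean_le {α : Type*} (s : Finset α) (f : α → ℝ) :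
    ∑ _j ∈ s, (1 / (#s : ℝ) * ∑ j ∈ s, f j) ^ 2 ≤ ∑ j ∈ s, f j ^ 2 := by
  rw [sum_const, nsmul_eq_mul]
  obtain rfl | hs := s.eq_empty_or_nonempty
  · simp
  have hcard : (0 : ℝ) < #s := by exact_mod_cast hs.card_pos
  calc (#s : ℝ) * (1 / #s * ∑ j ∈ s, f j) ^ 2 = (∑ j ∈ s, f j) ^ 2 / #s := by
        field_simp
    _ ≤ ∑ j ∈ s, f j ^ 2 :=
        div_le_of_le_mul₀ hcard.le (sum_nonneg fun _ _ => sq_nonneg _)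
          (sq_sum_le_card_mul_sum_sq.trans_eq (mul_comm _ _))

lemma sum_sq_sum_le_card_mul_sum_sum_sq {α β : Type*} (P : Finset β) (T : Finset α)
    (d : α → β → ℝ) :
    ∑ p ∈ P, (∑ τ ∈ T, d τ p) ^ 2 ≤ #T * ∑ τ ∈ T, ∑ p ∈ P, d τ p ^ 2 := by
  rw [sum_comm, mul_sum]
  exact sum_le_sum fun p _ => sq_sum_le_card_mul_sum_sq

section SubmodelAveraging

variable {ι κ : Type*} [Fintype ι] [DecidableEq κ] (S : ι → Finset κ)

/-- Coordinate `m` of `U ∑ⱼ gⱼ` with `U = diag(1/n_m)`, where `n_m` counts the clients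
holding `m`. -/
noncomputable def subAvg (g : ι → κ → ℝ) (m : κ) : ℝ :=
  1 / (#{i | m ∈ S i} : ℝ) * ∑ i ∈ {i | m ∈ S i}, g i m

variable [Fintype κ]

lemma sum_sum_mem_comm (f : ι → κ → ℝ) :
    ∑ i, ∑ m ∈ S i, f i m = ∑ m, ∑ i ∈ {i | m ∈ S i}, f i m :=
  sum_comm' fun i m => by simp

lemma sum_sum_subAvg_sq_le (g : ι → κ → ℝ) :
    ∑ i, ∑ m ∈ S i, subAvg S g m ^ 2 ≤ ∑ i, ∑ m ∈ S i, g i m ^ 2 := by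
  rw [sum_sum_mem_comm S, sum_sum_mem_comm S]
  exact sum_le_sum fun m _ => sum_const_sq_mean_le _ _

lemma sum_sum_sq_subAvg_sub_le (g : ι → κ → ℝ) :
    ∑ i, ∑ m ∈ S i, (subAvg S g m - g i m) ^ 2 ≤ 4 * ∑ i, ∑ m ∈ S i, g i m ^ 2 := by
  calc ∑ i, ∑ m ∈ S i, (subAvg S g m - g i m) ^ 2
      ≤ ∑ i, ∑ m ∈ S i, (2 * subAvg S g m ^ 2 + 2 * g i m ^ 2) := by
        gcongr with i _ m _
        nlinarith [sq_nonneg (subAvg S g m + g i m)]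
    _ = 2 * ∑ i, ∑ m ∈ S i, subAvg S g m ^ 2 + 2 * ∑ i, ∑ m ∈ S i, g i m ^ 2 := by
        simp only [sum_add_distrib, mul_sum]
    _ ≤ 4 * ∑ i, ∑ m ∈ S i, g i m ^ 2 := by
        linarith [sum_sum_subAvg_sq_le S g]

lemma sum_sum_sq_sum_subAvg_sub_le {α : Type*} (T : Finset α) (g : ι → α → κ → ℝ) (G : ℝ)
    (hG : ∀ i τ, ∑ m, g i τ m ^ 2 ≤ G ^ 2) :
    ∑ i, ∑ m ∈ S i, (∑ τ ∈ T, (subAvg S (fun j => g j τ) m - g i τ m)) ^ 2 ≤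
      4 * Fintype.card ι * G ^ 2 * #T ^ 2 := by
  have hstep : ∀ τ, ∑ i, ∑ m ∈ S i, (subAvg S (fun j => g j τ) m - g i τ m) ^ 2 ≤
      4 * Fintype.card ι * G ^ 2 := fun τ => by
    have hlocal : ∑ i, ∑ m ∈ S i, g i τ m ^ 2 ≤ Fintype.card ι * G ^ 2 := by
      calc ∑ i, ∑ m ∈ S i, g i τ m ^ 2 ≤ ∑ _i : ι, G ^ 2 :=
            sum_le_sum fun i _ => (sum_le_sum_of_subset_of_nonneg (subset_univ _)
              fun _ _ _ => sq_nonneg _).trans (hG i τ)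
        _ = Fintype.card ι * G ^ 2 := by simp
    linarith [sum_sum_sq_subAvg_sub_le S fun j => g j τ]
  calc ∑ i, ∑ m ∈ S i, (∑ τ ∈ T, (subAvg S (fun j => g j τ) m - g i τ m)) ^ 2
      ≤ ∑ i, #T * ∑ τ ∈ T, ∑ m ∈ S i, (subAvg S (fun j => g j τ) m - g i τ m) ^ 2 :=
        sum_le_sum fun i _ => sum_sq_sum_le_card_mul_sum_sum_sq _ _ _
    _ = #T * ∑ τ ∈ T, ∑ i, ∑ m ∈ S i, (subAvg S (fun j => g j τ) m - g i τ m) ^ 2 := by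
        rw [← mul_sum, sum_comm]
    _ ≤ #T * ∑ _τ ∈ T, 4 * Fintype.card ι * G ^ 2 := by
        gcongr with τ
        exact hstep τ
    _ = 4 * Fintype.card ι * G ^ 2 * #T ^ 2 := by
        rw [sum_const, nsmul_eq_mul]; ring

end SubmodelAveraging

theorem stmt_14_general {M Nn : ℕ} (γ G : ℝ) (t₀ t I : ℕ) (hI : 1 ≤ I)
    (ht : t - t₀ ≤ I - 1)
    (S : Fin Nn → Finset (Fin M)) (n : Fin M → ℕ)
    (hn : ∀ m, n m = (Finset.univ.filter (fun i => m ∈ S i)).card)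
    (g : Fin Nn → ℕ → Fin M → ℝ)
    (hG : ∀ i τ, ∑ m, (g i τ m) ^ 2 ≤ G ^ 2)
    (X0 : Fin M → ℝ)
    (x : Fin Nn → Fin M → ℝ)
    (hx : ∀ i m, x i m = X0 m - γ * ∑ τ ∈ Finset.Ico t₀ t, g i τ m)
    (Xt : Fin M → ℝ)
    (hXt : ∀ m, Xt m = X0 m - γ * ∑ τ ∈ Finset.Ico t₀ t,
      (1 / (n m : ℝ)) * ∑ i ∈ Finset.univ.filter (fun i => m ∈ S i), g i τ m) :
    (1 / (Nn : ℝ)) * ∑ i, ∑ m ∈ S i, (x i m - Xt m) ^ 2 ≤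
      4 * γ ^ 2 * G ^ 2 * ((I : ℝ) - 1) ^ 2 := by
  have hdev : ∀ i m, x i m - Xt m =
      γ * ∑ τ ∈ Ico t₀ t, (subAvg S (fun j => g j τ) m - g i τ m) := fun i m => by
    rw [hx, hXt, hn, sum_sub_distrib]
    unfold subAvg
    ring
  have hsteps : (#(Ico t₀ t) : ℝ) ≤ I - 1 := by
    rw [Nat.card_Ico, ← Nat.cast_one, ← Nat.cast_sub hI]
    exact_mod_cast ht
  have hbound := sum_sum_sq_sum_subAvg_sub_le S (Ico t₀ t) g G hG
  rw [Fintype.card_fin] at hbound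
  simp only [hdev, mul_pow, ← mul_sum]
  rw [one_div_mul_eq_div]
  refine div_le_of_le_mul₀ (Nat.cast_nonneg _) (by positivity) ?_
  calc γ ^ 2 * ∑ i, ∑ m ∈ S i, (∑ τ ∈ Ico t₀ t, (subAvg S (fun j => g j τ) m - g i τ m)) ^ 2
      ≤ γ ^ 2 * (4 * Nn * G ^ 2 * #(Ico t₀ t) ^ 2) := by gcongr
    _ ≤ γ ^ 2 * (4 * Nn * G ^ 2 * ((I : ℝ) - 1) ^ 2) := by gcongr
    _ = _ := by ring

/-- Deviation bound between local and global iterates in FedSubAvg: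
if x_i^t = X_i^{t₀} - γ∑_{τ=t₀}^{t-1} g_i^τ and
X^t = X^{t₀} - γ∑_{τ=t₀}^{t-1} U ∑_j g_j^τ with t - t₀ ≤ I - 1,
‖g_i^τ‖² ≤ G², U = diag(1/nₘ), supports S(j), then
(1/N)∑ᵢ ‖x_i^t - X_i^t‖² ≤ 4γ²G²(I-1)². -/
theorem stmt_14 {M Nn : ℕ} (γ G : ℝ) (t₀ t I : ℕ) (hI : 1 ≤ I) (ht₀ : t₀ ≤ t)
    (ht : t - t₀ ≤ I - 1)
    (S : Fin Nn → Finset (Fin M)) (n : Fin M → ℕ)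
    (hn : ∀ m, n m = (Finset.univ.filter (fun i => m ∈ S i)).card)
    (g : Fin Nn → ℕ → Fin M → ℝ)
    (hsupp : ∀ i τ m, m ∉ S i → g i τ m = 0)
    (hG : ∀ i τ, ∑ m, (g i τ m) ^ 2 ≤ G ^ 2)
    (X0 : Fin M → ℝ)
    (x : Fin Nn → Fin M → ℝ)
    (hx : ∀ i m, x i m = X0 m - γ * ∑ τ ∈ Finset.Ico t₀ t, g i τ m)
    (Xt : Fin M → ℝ)
    (hXt : ∀ m, Xt m = X0 m - γ * ∑ τ ∈ Finset.Ico t₀ t,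
      (1 / (n m : ℝ)) * ∑ i ∈ Finset.univ.filter (fun i => m ∈ S i), g i τ m) :
    (1 / (Nn : ℝ)) * ∑ i, ∑ m ∈ S i, (x i m - Xt m) ^ 2 ≤
      4 * γ ^ 2 * G ^ 2 * ((I : ℝ) - 1) ^ 2 :=
  stmt_14_general γ G t₀ t I hI ht S n hn g hG X0 x hx Xt hXt
end

section
/- Let f = (1/N) ∑_{i=1}^N fᵢ, where each fᵢ : ℝ^{S(i)} → ℝ depends only on coordinates in S(i) ⊆ {1,…,M} and is such that, at a point X, the restricted Hessian bound implies fᵢ(Y_{S(i)}) ≥ fᵢ(X_{S(i)}) + ⟨Y_{S(i)} − X_{S(i)}, ∇fᵢ(X_{S(i)})⟩ + (μᵢ/2)‖Y_{S(i)} − X_{S(i)}‖² for all Y, with ∑_{i: m ∈ S(i)} μᵢ ≥ n_m μ₀ for every m, where n_m = |{i : m ∈ S(i)}| and μ₀ > 0. Then for every Y: f(Y) ≥ f(X) − (1/(2μ₀)) ∇f(X)ᵀ D ∇f(X), where D = diag(N/n₁, …, N/n_M). In particular, if ∇f(X)ᵀ D ∇f(X) ≤ ε then f(X) ≤ inf_Y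 f(Y) + ε/(2μ₀). -/
/-!
Summing the strong-convexity inequalities of the `fᵢ` and regrouping by coordinate gives
`N f(Y) ≥ N f(X) + ∑ₘ (Gₘ tₘ + (Aₘ / 2) tₘ²)` with `tₘ = Yₘ - Xₘ`, `Gₘ = ∑_{i : m ∈ S(i)} gᵢₘ`
and `Aₘ = ∑_{i : m ∈ S(i)} μᵢ ≥ nₘ μ₀`. Each one-dimensional quadratic is at least its minimum
`-Gₘ² / (2 nₘ μ₀)`, and `∑ₘ Gₘ² / (2 nₘ μ₀)` is `N / (2 μ₀)` times `∇f(X)ᵀ D ∇f(X)`.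
-/

open Finset

lemma Finset.sum_sum_mem_comm {ι κ β : Type*} [Fintype ι] [Fintype κ] [DecidableEq κ]
    [AddCommMonoid β] (S : ι → Finset κ) (h : ι → κ → β) :
    ∑ i, ∑ m ∈ S i, h i m = ∑ m, ∑ i with m ∈ S i, h i m :=
  Finset.sum_comm' fun i m => by simp

lemma sum_add_sum_regroup_le {ι κ : Type*} [Fintype ι] [Fintype κ] [DecidableEq κ]
    (S : ι → Finset κ) (φ ψ μ : ι → ℝ) (g : ι → κ → ℝ) (t : κ → ℝ)
    (h : ∀ i, φ i + ∑ m ∈ S i, g i m * t m + μ i / 2 * ∑ m ∈ S i, t m ^ 2 ≤ ψ i) :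
    ∑ i, φ i + ∑ m, ((∑ i with m ∈ S i, g i m) * t m
        + (∑ i with m ∈ S i, μ i) / 2 * t m ^ 2) ≤ ∑ i, ψ i := by
  have regroup : ∑ i, (∑ m ∈ S i, g i m * t m + μ i / 2 * ∑ m ∈ S i, t m ^ 2)
      = ∑ m, ((∑ i with m ∈ S i, g i m) * t m + (∑ i with m ∈ S i, μ i) / 2 * t m ^ 2) := by
    simp only [mul_sum, sum_add_distrib, sum_sum_mem_comm S, sum_mul, sum_div]
  calc _ = ∑ i, (φ i + ∑ m ∈ S i, g i m * t m + μ i / 2 * ∑ m ∈ S i, t m ^ 2) := by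
        rw [← regroup, ← sum_add_distrib]
        simp only [add_assoc]
    _ ≤ ∑ i, ψ i := sum_le_sum fun i _ => h i

lemma neg_sq_div_le_mul_add_sq {c a : ℝ} (hc : 0 < c) (ha : c ≤ a) (g t : ℝ) :
    -(g ^ 2 / (2 * c)) ≤ g * t + a / 2 * t ^ 2 :=
  calc -(g ^ 2 / (2 * c)) ≤ -(g ^ 2 / (2 * c)) + (c * t + g) ^ 2 / (2 * c) :=
        le_add_of_nonneg_right (by positivity)
    _ = g * t + c / 2 * t ^ 2 := by field_simp; ring
    _ ≤ g * t + a / 2 * t ^ 2 := by gcongr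

lemma neg_sq_sum_div_le_sum_mul_add_sum_sq {ι : Type*} (s : Finset ι) (g μ : ι → ℝ)
    {μ₀ : ℝ} (hμ₀ : 0 < μ₀) (hμ : #s * μ₀ ≤ ∑ i ∈ s, μ i) (t : ℝ) :
    -((∑ i ∈ s, g i) ^ 2 / (2 * (#s * μ₀))) ≤ (∑ i ∈ s, g i) * t + (∑ i ∈ s, μ i) / 2 * t ^ 2 := by
  rcases s.eq_empty_or_nonempty with rfl | hs
  · simp
  · exact neg_sq_div_le_mul_add_sq (by positivity) hμ _ _

-- Also valid when `N`, `n` or `μ` vanishes, since then both sides are `0` (as `x / 0 = 0`).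
lemma one_div_two_mul_div_mul_sq_eq (N n μ G : ℝ) :
    1 / (2 * μ) * (N / n * (1 / N * G) ^ 2) = 1 / N * (G ^ 2 / (2 * (n * μ))) := by
  rcases eq_or_ne N 0 with rfl | hN
  · simp
  rcases eq_or_ne n 0 with rfl | hn
  · simp
  rcases eq_or_ne μ 0 with rfl | hμ
  · simp
  field_simp

theorem stmt_17_general {M N : ℕ} (μ₀ ε : ℝ) (hμ₀ : 0 < μ₀)
    (S : Fin N → Finset (Fin M)) (n : Fin M → ℕ)
    (hn : ∀ m, n m = (Finset.univ.filter (fun i => m ∈ S i)).card)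
    (fi : Fin N → (Fin M → ℝ) → ℝ)
    (gi : Fin N → Fin M → ℝ)
    (μi : Fin N → ℝ)
    (hμs : ∀ m, (n m : ℝ) * μ₀ ≤ ∑ i ∈ Finset.univ.filter (fun i => m ∈ S i), μi i)
    (X : Fin M → ℝ)
    (hsc : ∀ i Y, fi i X + (∑ m ∈ S i, gi i m * (Y m - X m))
        + (μi i / 2) * ∑ m ∈ S i, (Y m - X m) ^ 2 ≤ fi i Y)
    (f : (Fin M → ℝ) → ℝ) (hf : ∀ x, f x = (1 / (N : ℝ)) * ∑ i, fi i x)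
    (gradF : Fin M → ℝ)
    (hgrad : ∀ m, gradF m =
      (1 / (N : ℝ)) * ∑ i ∈ Finset.univ.filter (fun i => m ∈ S i), gi i m) :
    (∀ Y, f X - (1 / (2 * μ₀)) * ∑ m, ((N : ℝ) / (n m : ℝ)) * (gradF m) ^ 2 ≤ f Y) ∧
    ((∑ m, ((N : ℝ) / (n m : ℝ)) * (gradF m) ^ 2 ≤ ε) →
      ∀ Y, f X ≤ f Y + ε / (2 * μ₀)) := by
  have main : ∀ Y, f X - (1 / (2 * μ₀)) * ∑ m, ((N : ℝ) / (n m : ℝ)) * (gradF m) ^ 2 ≤ f Y := by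
    intro Y
    have summed := sum_add_sum_regroup_le S (fun i => fi i X) (fun i => fi i Y) μi gi
      (fun m => Y m - X m) fun i => hsc i Y
    have coord := sum_le_sum fun m (_ : m ∈ univ) =>
      neg_sq_sum_div_le_sum_mul_add_sum_sq _ (gi · m) μi hμ₀ (hn m ▸ hμs m) (Y m - X m)
    have grad_term : 1 / (2 * μ₀) * ∑ m, ((N : ℝ) / (n m : ℝ)) * (gradF m) ^ 2
        = 1 / N * ∑ m, (∑ i with m ∈ S i, gi i m) ^ 2 / (2 * (n m * μ₀)) := by
      rw [mul_sum, mul_sum]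
      exact sum_congr rfl fun m _ => by rw [hgrad, one_div_two_mul_div_mul_sq_eq]
    simp only [← hn, sum_neg_distrib] at coord
    rw [grad_term, hf, hf, ← mul_sub]
    exact mul_le_mul_of_nonneg_left (by linarith) (by positivity)
  refine ⟨main, fun hε Y => ?_⟩
  have : 1 / (2 * μ₀) * ∑ m, ((N : ℝ) / (n m : ℝ)) * (gradF m) ^ 2 ≤ ε / (2 * μ₀) := by
    rw [one_div_mul_eq_div]
    gcongr
  linarith [main Y]

/-- Restricted strong convexity bound for federated submodel objectives:
if f = (1/N)∑ᵢ fᵢ, each fᵢ depends only on coordinates in S(i) and satisfies a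
μᵢ-strong convexity inequality at X on its support, with
∑_{i: m∈S(i)} μᵢ ≥ nₘ μ₀ for each coordinate m, then for all Y:
f(Y) ≥ f(X) - (1/(2μ₀)) ∇f(X)ᵀ D ∇f(X) with D = diag(N/nₘ); in particular
∇f(X)ᵀ D ∇f(X) ≤ ε implies f(X) ≤ inf f + ε/(2μ₀). -/
theorem stmt_17 {M N : ℕ} (μ₀ ε : ℝ) (hμ₀ : 0 < μ₀)
    (S : Fin N → Finset (Fin M)) (n : Fin M → ℕ)
    (hn : ∀ m, n m = (Finset.univ.filter (fun i => m ∈ S i)).card)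
    (fi : Fin N → (Fin M → ℝ) → ℝ)
    (hdep : ∀ i Y Y', (∀ m ∈ S i, Y m = Y' m) → fi i Y = fi i Y')
    (gi : Fin N → Fin M → ℝ) (hgsupp : ∀ i m, m ∉ S i → gi i m = 0)
    (μi : Fin N → ℝ)
    (hμs : ∀ m, (n m : ℝ) * μ₀ ≤ ∑ i ∈ Finset.univ.filter (fun i => m ∈ S i), μi i)
    (X : Fin M → ℝ)
    (hsc : ∀ i Y, fi i X + (∑ m ∈ S i, gi i m * (Y m - X m))
        + (μi i / 2) * ∑ m ∈ S i, (Y m - X m) ^ 2 ≤ fi i Y)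
    (f : (Fin M → ℝ) → ℝ) (hf : ∀ x, f x = (1 / (N : ℝ)) * ∑ i, fi i x)
    (gradF : Fin M → ℝ)
    (hgrad : ∀ m, gradF m =
      (1 / (N : ℝ)) * ∑ i ∈ Finset.univ.filter (fun i => m ∈ S i), gi i m) :
    (∀ Y, f X - (1 / (2 * μ₀)) * ∑ m, ((N : ℝ) / (n m : ℝ)) * (gradF m) ^ 2 ≤ f Y) ∧
    ((∑ m, ((N : ℝ) / (n m : ℝ)) * (gradF m) ^ 2 ≤ ε) →
      ∀ Y, f X ≤ f Y + ε / (2 * μ₀)) :=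
  stmt_17_general μ₀ ε hμ₀ S n hn fi gi μi hμs X hsc f hf gradF hgrad
end

section
/- Let Λ = diag(n₁/N, …, n_M/N) with each n_m ∈ {1, …, N}, and let Hᵢ (i = 1,…,N) be symmetric matrices, each supported on the principal submatrix indexed by S(i) (zero outside), with ρ₁ I_{S(i)} ⪯ Hᵢ ⪯ ρ₂ I_{S(i)} on its support for i in a set of 'good' clients and −ρ₂ I_{S(i)} ⪯ Hᵢ ⪯ −ρ₁ I_{S(i)} otherwise, where for each coordinate m at most α·n_m of the clients containing m are not good and (1−α)ρ₁ − αρ₂ > 0. Then H = (1/N) ∑ᵢ Hᵢ satisfies (ρ₁ − α(ρ₁+ρ₂)) Λ ⪯ H ⪯ ρ₂ Λ. -/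
/-!
Every client's Hessian is squeezed between scalar multiples of `I_{S(i)}`: `w i • I_{S(i)} ⪯ Hᵢ`
with `w i = ρ₁` for good and `w i = -ρ₂` for bad clients, and `Hᵢ ⪯ ρ₂ • I_{S(i)}` for all of
them (a bad client has `Hᵢ ⪯ -ρ₁ • I_{S(i)} ⪯ ρ₂ • I_{S(i)}`). Summing over the clients, both
bounds become diagonal; the `m`-th entry of the lower one is
`ρ₁ nₘ - (ρ₁ + ρ₂) bₘ ≥ (ρ₁ - α (ρ₁ + ρ₂)) nₘ`, where `bₘ ≤ α nₘ` counts the bad clients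
containing `m`.
-/
open Finset Matrix
open scoped MatrixOrder ComplexOrder

namespace Matrix

variable {n : Type*} [DecidableEq n]

def diagIndicator (R : Type*) [Zero R] [One R] (S : Finset n) : Matrix n n R :=
  diagonal fun m => if m ∈ S then 1 else 0

theorem sum_smul_diagIndicator {ι R : Type*} [Fintype ι] [Semiring R] (S : ι → Finset n)
    (w : ι → R) :
    ∑ i, w i • diagIndicator R (S i) = diagonal fun m => ∑ i with m ∈ S i, w i := by
  ext a b
  rcases eq_or_ne a b with rfl | hab
  · simp [diagIndicator, sum_apply, Finset.sum_filter]
  · simp [diagIndicator, sum_apply, hab]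

variable {𝕜 : Type*} [RCLike 𝕜]

theorem diagIndicator_nonneg (S : Finset n) : 0 ≤ diagIndicator 𝕜 S :=
  (PosSemidef.diagonal fun m => by dsimp only; split_ifs <;> simp).nonneg

theorem diagonal_le_diagonal {d e : n → 𝕜} (h : d ≤ e) : diagonal d ≤ diagonal e := by
  rw [le_iff, diagonal_sub]
  exact PosSemidef.diagonal (sub_nonneg.2 h)

variable {ι : Type*} [Fintype ι] {S : ι → Finset n} {w : ι → ℝ} {A : ι → Matrix n n ℝ}

theorem diagonal_sum_le_sum (h : ∀ i, w i • diagIndicator ℝ (S i) ≤ A i) :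
    (diagonal fun m => ∑ i with m ∈ S i, w i) ≤ ∑ i, A i :=
  sum_smul_diagIndicator S w ▸ sum_le_sum fun i _ => h i

theorem sum_le_diagonal_sum (h : ∀ i, A i ≤ w i • diagIndicator ℝ (S i)) :
    ∑ i, A i ≤ diagonal fun m => ∑ i with m ∈ S i, w i :=
  sum_smul_diagIndicator S w ▸ sum_le_sum fun i _ => h i

end Matrix

theorem Finset.sum_ite_mem_neg {ι R : Type*} [DecidableEq ι] [CommRing R] (T G : Finset ι)
    (a b : R) :
    ∑ i ∈ T, (if i ∈ G then a else -b) = #T * a - #{i ∈ T | i ∉ G} * (a + b) := by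
  have h (i : ι) : (if i ∈ G then a else -b) = a - (if i ∉ G then 1 else 0) * (a + b) := by
    split_ifs <;> ring
  simp only [h, sum_sub_distrib, sum_const, nsmul_eq_mul, ← sum_mul, sum_boole]

theorem stmt_19_general {M N : ℕ} (ρ₁ ρ₂ α : ℝ) (hρ₁ : 0 < ρ₁) (hρ₂ : ρ₁ < ρ₂)
    (S : Fin N → Finset (Fin M)) (n : Fin M → ℕ)
    (hn : ∀ m, n m = (Finset.univ.filter (fun i => m ∈ S i)).card)
    (Good : Finset (Fin N))
    (Hi : Fin N → Matrix (Fin M) (Fin M) ℝ)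
    (hgood : ∀ i ∈ Good,
      (Hi i - ρ₁ • Matrix.diagonal (fun m => if m ∈ S i then (1 : ℝ) else 0)).PosSemidef ∧
      (ρ₂ • Matrix.diagonal (fun m => if m ∈ S i then (1 : ℝ) else 0) - Hi i).PosSemidef)
    (hbad : ∀ i ∉ Good,
      (-(ρ₁ • Matrix.diagonal (fun m => if m ∈ S i then (1 : ℝ) else 0)) - Hi i).PosSemidef ∧
      (Hi i + ρ₂ • Matrix.diagonal (fun m => if m ∈ S i then (1 : ℝ) else 0)).PosSemidef)
    (hcount : ∀ m,
      (((Finset.univ.filter (fun i => m ∈ S i ∧ i ∉ Good)).card : ℝ)) ≤ α * (n m : ℝ))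
    (H : Matrix (Fin M) (Fin M) ℝ) (hH : H = (1 / (N : ℝ)) • ∑ i, Hi i) :
    (H - (ρ₁ - α * (ρ₁ + ρ₂)) • Matrix.diagonal (fun m => (n m : ℝ) / (N : ℝ))).PosSemidef ∧
    (ρ₂ • Matrix.diagonal (fun m => (n m : ℝ) / (N : ℝ)) - H).PosSemidef := by
  set w : Fin N → ℝ := fun i => if i ∈ Good then ρ₁ else -ρ₂
  have hlower (i : Fin N) : w i • diagIndicator ℝ (S i) ≤ Hi i := by
    by_cases hi : i ∈ Good
    · simp only [w, if_pos hi]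
      exact (hgood i hi).1
    · simp only [w, if_neg hi, le_iff, neg_smul, sub_neg_eq_add]
      exact (hbad i hi).2
  have hupper (i : Fin N) : Hi i ≤ ρ₂ • diagIndicator ℝ (S i) := by
    by_cases hi : i ∈ Good
    · exact (hgood i hi).2
    · refine le_trans (hbad i hi).1 ?_
      rw [← neg_smul]
      exact smul_le_smul_of_nonneg_right (by linarith) (diagIndicator_nonneg _)
  have hΛ : diagonal (fun m => (n m : ℝ) / N) = (1 / (N : ℝ)) • diagonal (fun m => (n m : ℝ)) := by
    rw [← diagonal_smul]; congr 1; ext m; simp [div_eq_inv_mul]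
  rw [← le_iff, ← le_iff, hΛ, smul_comm, smul_comm ρ₂, hH]
  refine ⟨smul_le_smul_of_nonneg_left ?_ (by positivity),
    smul_le_smul_of_nonneg_left ?_ (by positivity)⟩
  · refine le_trans ?_ (diagonal_sum_le_sum hlower)
    rw [← diagonal_smul]
    refine diagonal_le_diagonal fun m => ?_
    have := mul_le_mul_of_nonneg_left (hcount m) (by linarith : 0 ≤ ρ₁ + ρ₂)
    simp only [w, Pi.smul_apply, smul_eq_mul, sum_ite_mem_neg, filter_filter, ← hn]
    linarith
  · refine (sum_le_diagonal_sum hupper).trans_eq ?_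
    rw [← diagonal_smul]
    congr 1; ext m; simp [hn, mul_comm]

/-- Aggregated Hessian bound under feature heat dispersion: if each local
Hessian Hᵢ is supported on S(i), with ρ₁ I_{S(i)} ⪯ Hᵢ ⪯ ρ₂ I_{S(i)} for good
clients and -ρ₂ I_{S(i)} ⪯ Hᵢ ⪯ -ρ₁ I_{S(i)} for bad ones, and for each
coordinate m at most α nₘ of the clients containing m are bad, with
(1-α)ρ₁ - αρ₂ > 0, then H = (1/N)∑ᵢ Hᵢ satisfies
(ρ₁ - α(ρ₁+ρ₂)) Λ ⪯ H ⪯ ρ₂ Λ with Λ = diag(nₘ/N). -/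
theorem stmt_19 {M N : ℕ} (ρ₁ ρ₂ α : ℝ) (hρ₁ : 0 < ρ₁) (hρ₂ : ρ₁ < ρ₂)
    (hα : 0 ≤ α) (hαρ : 0 < (1 - α) * ρ₁ - α * ρ₂)
    (S : Fin N → Finset (Fin M)) (n : Fin M → ℕ)
    (hn : ∀ m, n m = (Finset.univ.filter (fun i => m ∈ S i)).card)
    (Good : Finset (Fin N))
    (Hi : Fin N → Matrix (Fin M) (Fin M) ℝ)
    (hsym : ∀ i, (Hi i).IsHermitian)
    (hsupp : ∀ i m m', (m ∉ S i ∨ m' ∉ S i) → Hi i m m' = 0)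
    (hgood : ∀ i ∈ Good,
      (Hi i - ρ₁ • Matrix.diagonal (fun m => if m ∈ S i then (1 : ℝ) else 0)).PosSemidef ∧
      (ρ₂ • Matrix.diagonal (fun m => if m ∈ S i then (1 : ℝ) else 0) - Hi i).PosSemidef)
    (hbad : ∀ i ∉ Good,
      (-(ρ₁ • Matrix.diagonal (fun m => if m ∈ S i then (1 : ℝ) else 0)) - Hi i).PosSemidef ∧
      (Hi i + ρ₂ • Matrix.diagonal (fun m => if m ∈ S i then (1 : ℝ) else 0)).PosSemidef)
    (hcount : ∀ m,
      (((Finset.univ.filter (fun i => m ∈ S i ∧ i ∉ Good)).card : ℝ)) ≤ α * (n m : ℝ))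
    (H : Matrix (Fin M) (Fin M) ℝ) (hH : H = (1 / (N : ℝ)) • ∑ i, Hi i) :
    (H - (ρ₁ - α * (ρ₁ + ρ₂)) • Matrix.diagonal (fun m => (n m : ℝ) / (N : ℝ))).PosSemidef ∧
    (ρ₂ • Matrix.diagonal (fun m => (n m : ℝ) / (N : ℝ)) - H).PosSemidef :=
  stmt_19_general ρ₁ ρ₂ α hρ₁ hρ₂ S n hn Good Hi hgood hbad hcount H hH
end
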